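/- arXiv:1503.04245 — 4 statements merged into one kernel-verified Lean document; each statement's English description precedes it below -/
import Mathlib

section
/- For every natural number n, the number of parking functions on [n] equals (n+1)^(n-1). That is, the number of functions f : [n] → [n] such that for every k with 1 ≤ k ≤ n the number of indices i with f(i) ≤ k is at least k, equals (n+1)^(n-1). -/
/-- A parking function on `[n] = {1, …, n}` (modeled by `Fin n`, with `i : Fin n`
representing the value `i + 1`): for every `k` with `1 ≤ k ≤ n`, the number of
indices `i` with `f i ≤ k` is at least `k`. -/
def IsParkingFunction (n : ℕ) (f : Fin n → Fin n) : Prop :=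
  ∀ k ∈ Finset.Icc 1 n, k ≤ (Finset.univ.filter fun i => (f i : ℕ) + 1 ≤ k).card

namespace ParkingAux

open Finset

/-! ### The cycle lemma -/

/-- Landing in a window. -/
lemma exists_land (m a j : ℕ) (hm : 0 < m) (hj : j < a) :
    ∃ k, 1 ≤ k ∧ a ≤ j + k * m ∧ j + k * m < a + m := by
  have H : ∀ d j, a - j ≤ d → j < a → ∃ k, 1 ≤ k ∧ a ≤ j + k * m ∧ j + k * m < a + m := by
    intro d
    induction d with
    | zero => intro j h1 h2; omega
    | succ d ih =>
      intro j h1 h2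
      by_cases hc : a ≤ j + m
      · refine ⟨1, le_refl 1, ?_, ?_⟩ <;> rw [one_mul] <;> omega
      · obtain ⟨k, hk1, hk2, hk3⟩ := ih (j + m) (by omega) (by omega)
        have he : (k + 1) * m = k * m + m := by ring
        exact ⟨k + 1, by omega, by rw [he]; linarith, by rw [he]; linarith⟩
  exact H (a - j) j le_rfl hj

/-- Cycle lemma: a `ℤ`-valued sequence that gains exactly 1 per period `m` has exactly
one strict-record position in any window of length `m` located past the first period. -/
lemma cycle_lemma (m a : ℕ) (hm : 0 < m) (ham : m ≤ a) (S : ℕ → ℤ)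
    (hS : ∀ t, S (t + m) = S t + 1) :
    ∃! t, t ∈ Finset.Ico a (a + m) ∧ ∀ j < t, S j < S t := by
  have hSk : ∀ t k, S (t + k * m) = S t + k := by
    intro t k
    induction k with
    | zero => simp
    | succ k ih =>
      have : t + (k + 1) * m = t + k * m + m := by ring
      rw [this, hS, ih]; push_cast; ring
  set W : Finset ℕ := Finset.Ico a (a + m) with hW
  have hWne : W.Nonempty := ⟨a, by simp [hW]; omega⟩
  set A : Finset ℕ := W.filter (fun t => ∀ u ∈ W, S u ≤ S t) with hA
  have hAne : A.Nonempty := by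
    obtain ⟨b, hb, hbmax⟩ := W.exists_max_image S hWne
    exact ⟨b, by simp only [hA, mem_filter]; exact ⟨hb, hbmax⟩⟩
  set t₁ := A.min' hAne with ht₁
  have ht₁A : t₁ ∈ A := A.min'_mem hAne
  have ht₁W : t₁ ∈ W := (mem_filter.mp ht₁A).1
  have ht₁max : ∀ u ∈ W, S u ≤ S t₁ := (mem_filter.mp ht₁A).2
  have hrec : ∀ j < t₁, S j < S t₁ := by
    intro j hj
    rcases lt_or_ge j a with hja | hja
    · obtain ⟨k, hk1, hk2, hk3⟩ := exists_land m a j hm hja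
      have hmem : j + k * m ∈ W := by simp [hW]; omega
      have := ht₁max _ hmem
      rw [hSk j k] at this
      have : S j + 1 ≤ S j + k := by
        have : (1 : ℤ) ≤ k := by exact_mod_cast hk1
        linarith
      linarith [ht₁max _ hmem, hSk j k]
    · have hjW : j ∈ W := by
        simp only [hW, Finset.mem_Ico] at ht₁W ⊢
        exact ⟨hja, lt_of_lt_of_le hj (le_of_lt ht₁W.2)⟩
      have hle : S j ≤ S t₁ := ht₁max _ hjW
      rcases lt_or_eq_of_le hle with h | h
      · exact h
      · exfalso
        have hjA : j ∈ A := by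
          simp only [hA, mem_filter]
          exact ⟨hjW, fun u hu => h ▸ ht₁max u hu⟩
        exact absurd (A.min'_le j hjA) (by omega)
  refine ⟨t₁, ⟨ht₁W, hrec⟩, ?_⟩
  rintro t ⟨htW, htrec⟩
  have htmax : ∀ u ∈ W, S u ≤ S t := by
    intro u hu
    rcases lt_or_ge u t with h | h
    · exact le_of_lt (htrec u h)
    · have hum : m ≤ u := le_trans ham (Finset.mem_Ico.mp hu).1
      have hu' : u - m < t := by
        have h1 := (Finset.mem_Ico.mp hu).2
        have h2 := (Finset.mem_Ico.mp htW).1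
        omega
      have h3 : u - m + m = u := by omega
      have h4 := hS (u - m)
      rw [h3] at h4
      linarith [htrec _ hu']
  have htA : t ∈ A := by simp only [hA, mem_filter]; exact ⟨htW, htmax⟩
  have h1 : t₁ ≤ t := A.min'_le t htA
  rcases lt_or_eq_of_le h1 with h | h
  · exact absurd (htrec t₁ h) (not_lt.mpr (ht₁max t htW))
  · exact h.symm

/-! ### Counting setup for a function `h : Fin n → ZMod (n+1)` -/

variable {n : ℕ}

/-- Number of indices hitting residue `u`. -/
def cnt (h : Fin n → ZMod (n + 1)) (u : ℕ) : ℕ :=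
  (Finset.univ.filter fun i => h i = (u : ZMod (n + 1))).card

/-- The running "free spots minus cars" count. -/
def Sf (h : Fin n → ZMod (n + 1)) (t : ℕ) : ℤ :=
  (t : ℤ) - ∑ u ∈ Finset.range t, (cnt h u : ℤ)

lemma sum_cnt_window (h : Fin n → ZMod (n + 1)) (t : ℕ) :
    ∑ u ∈ Finset.range (n + 1), cnt h (t + u) = n := by
  have key : (Finset.univ : Finset (Fin n)).card
      = ∑ u ∈ Finset.range (n + 1),
          (Finset.univ.filter fun i => (h i - (t : ZMod (n + 1))).val = u).card := by
    apply Finset.card_eq_sum_card_fiberwise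
    intro i _
    exact Finset.mem_range.mpr (ZMod.val_lt _)
  rw [Finset.card_univ, Fintype.card_fin] at key
  have hcongr : ∑ u ∈ Finset.range (n + 1), cnt h (t + u)
      = ∑ u ∈ Finset.range (n + 1),
          (Finset.univ.filter fun i => (h i - (t : ZMod (n + 1))).val = u).card := by
    apply Finset.sum_congr rfl
    intro u hu
    have hu' : u < n + 1 := Finset.mem_range.mp hu
    unfold cnt
    congr 1
    apply Finset.filter_congr
    intro i _
    constructor
    · intro hi
      have h2 : h i - (t : ZMod (n + 1)) = (u : ZMod (n + 1)) := by
        rw [hi]; push_cast; ring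
      rw [h2, ZMod.val_cast_of_lt hu']
    · intro hi
      have h2 : h i - (t : ZMod (n + 1)) = (u : ZMod (n + 1)) := by
        have h3 : (((h i - (t : ZMod (n + 1))).val : ℕ) : ZMod (n + 1))
            = h i - (t : ZMod (n + 1)) := by
          rw [ZMod.natCast_val, ZMod.cast_id]
        rw [← h3, hi]
      have h4 : h i = (u : ZMod (n + 1)) + (t : ZMod (n + 1)) := by
        rw [← h2]; ring
      rw [h4]; push_cast; ring
  rw [hcongr]; exact key.symm

lemma Sf_period (h : Fin n → ZMod (n + 1)) (t : ℕ) :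
    Sf h (t + (n + 1)) = Sf h t + 1 := by
  unfold Sf
  rw [Finset.sum_range_add]
  have : ∑ u ∈ Finset.range (n + 1), (cnt h (t + u) : ℤ) = (n : ℤ) := by
    rw [← Nat.cast_sum]
    exact_mod_cast congrArg (Nat.cast : ℕ → ℤ) (sum_cnt_window h t)
  rw [this]
  push_cast
  ring

/-- `s` is a good starting spot: every arc ending at `s` is not overloaded. -/
def GoodVal (h : Fin n → ZMod (n + 1)) (s : ZMod (n + 1)) : Prop :=
  ∀ L ≤ n, (Finset.univ.filter fun i => (s - h i).val ≤ L).card ≤ L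

lemma count_eq (h : Fin n → ZMod (n + 1)) (s : ZMod (n + 1)) (L : ℕ) (hL : L ≤ n) :
    ((Finset.univ.filter fun i => (s - h i).val ≤ L).card : ℤ)
      = (L + 1 : ℤ) - Sf h (s.val + n + 2) + Sf h (s.val + n + 1 - L) := by
  set T := s.val + n + 1 with hT
  have hsvlt : s.val < n + 1 := ZMod.val_lt s
  have hLT : L ≤ T := by omega
  have hcast : ((T : ℕ) : ZMod (n + 1)) = s := by
    have h0 : ((n + 1 : ℕ) : ZMod (n + 1)) = 0 := ZMod.natCast_self _
    have h1 : ((s.val : ℕ) : ZMod (n + 1)) = s := by rw [ZMod.natCast_val, ZMod.cast_id]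
    have h2 : (T : ℕ) = s.val + (n + 1) := by omega
    rw [h2, Nat.cast_add, h0, h1, add_zero]
  have Hfib : ∀ i ∈ (Finset.univ.filter fun i : Fin n => (s - h i).val ≤ L),
      T - (s - h i).val ∈ Finset.Icc (T - L) T := by
    intro i hi
    simp only [Finset.mem_filter] at hi
    simp only [Finset.mem_Icc]
    omega
  have step1 := Finset.card_eq_sum_card_fiberwise Hfib
  have hsummand : ∀ u ∈ Finset.Icc (T - L) T,
      ((Finset.univ.filter fun i : Fin n => (s - h i).val ≤ L).filter
        fun i => T - (s - h i).val = u).card = cnt h u := by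
    intro u hu
    simp only [Finset.mem_Icc] at hu
    unfold cnt
    rw [Finset.filter_filter]
    congr 1
    ext i
    simp only [Finset.mem_filter, Finset.mem_univ, true_and]
    have hvc : (((s - h i).val : ℕ) : ZMod (n + 1)) = s - h i := by
      rw [ZMod.natCast_val, ZMod.cast_id]
    have hcsub : ((T - u : ℕ) : ZMod (n + 1)) = s - (u : ZMod (n + 1)) := by
      rw [Nat.cast_sub hu.2, hcast]
    constructor
    · rintro ⟨hv, hfu⟩
      have hval : (s - h i).val = T - u := by omega
      calc h i = s - (s - h i) := (sub_sub_cancel s (h i)).symm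
        _ = s - (((s - h i).val : ℕ) : ZMod (n + 1)) := by rw [hvc]
        _ = s - ((T - u : ℕ) : ZMod (n + 1)) := by rw [hval]
        _ = s - (s - (u : ZMod (n + 1))) := by rw [hcsub]
        _ = (u : ZMod (n + 1)) := sub_sub_cancel _ _
    · intro hi
      have hshi : s - h i = ((T - u : ℕ) : ZMod (n + 1)) := by rw [hi, hcsub]
      have hval : (s - h i).val = T - u := by
        rw [hshi, ZMod.val_cast_of_lt (by omega : T - u < n + 1)]
      exact ⟨by omega, by omega⟩
  rw [Finset.sum_congr rfl hsummand] at step1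
  rw [step1]
  have hIcc : Finset.Icc (T - L) T = Finset.Ico (T - L) (T + 1) := by
    rw [Finset.Ico_add_one_right_eq_Icc]
  have hsub : ∑ u ∈ Finset.Ico (T - L) (T + 1), (cnt h u : ℤ)
      = ∑ u ∈ Finset.range (T + 1), (cnt h u : ℤ)
        - ∑ u ∈ Finset.range (T - L), (cnt h u : ℤ) :=
    Finset.sum_Ico_eq_sub _ (by omega)
  have hcastsum : ((∑ u ∈ Finset.Icc (T - L) T, cnt h u : ℕ) : ℤ)
      = ∑ u ∈ Finset.Ico (T - L) (T + 1), (cnt h u : ℤ) := by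
    rw [hIcc]; push_cast; rfl
  rw [hcastsum, hsub]
  have e1 : s.val + n + 2 = T + 1 := by omega
  have e2 : s.val + n + 1 - L = T - L := by omega
  rw [e1, e2]
  unfold Sf
  have e3 : ((T - L : ℕ) : ℤ) = (T : ℤ) - (L : ℤ) := by omega
  rw [e3]
  push_cast
  ring

lemma goodVal_iff_record (h : Fin n → ZMod (n + 1)) (s : ZMod (n + 1)) :
    GoodVal h s ↔ ∀ j < s.val + n + 2, Sf h j < Sf h (s.val + n + 2) := by
  have hsvlt : s.val < n + 1 := ZMod.val_lt s
  constructor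
  · intro hg
    have claim1 : ∀ j, s.val + 1 ≤ j → j < s.val + n + 2 →
        Sf h j < Sf h (s.val + n + 2) := by
      intro j hj1 hj2
      have hL : s.val + n + 1 - j ≤ n := by omega
      have hce := count_eq h s (s.val + n + 1 - j) hL
      have hcard : ((Finset.univ.filter
            fun i => (s - h i).val ≤ s.val + n + 1 - j).card : ℤ)
          ≤ ((s.val + n + 1 - j : ℕ) : ℤ) := by exact_mod_cast hg _ hL
      have ej : s.val + n + 1 - (s.val + n + 1 - j) = j := by omega
      rw [ej] at hce
      rw [hce] at hcard
      linarith
    intro j hj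
    rcases le_or_gt (s.val + 1) j with hc | hc
    · exact claim1 j hc hj
    · have h4 := Sf_period h j
      have h5 := claim1 (j + (n + 1)) (by omega) (by omega)
      linarith
  · intro hrec L hL
    have hce := count_eq h s L hL
    have hj := hrec (s.val + n + 1 - L) (by omega)
    have hfin : ((Finset.univ.filter fun i => (s - h i).val ≤ L).card : ℤ) ≤ (L : ℤ) := by
      rw [hce]; linarith
    exact_mod_cast hfin

lemma existsUnique_goodVal (h : Fin n → ZMod (n + 1)) :
    ∃! s : ZMod (n + 1), GoodVal h s := by
  obtain ⟨t, ⟨htW, htrec⟩, huniq⟩ :=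
    cycle_lemma (n + 1) (n + 2) (Nat.succ_pos n) (by omega) (Sf h) (Sf_period h)
  rw [Finset.mem_Ico] at htW
  refine ⟨((t - (n + 2) : ℕ) : ZMod (n + 1)), ?_, ?_⟩
  · show GoodVal h _
    have hval : (((t - (n + 2) : ℕ) : ZMod (n + 1))).val = t - (n + 2) :=
      ZMod.val_cast_of_lt (by omega)
    rw [goodVal_iff_record, hval]
    have e1 : t - (n + 2) + n + 2 = t := by omega
    rw [e1]
    exact htrec
  · intro s hs
    rw [goodVal_iff_record] at hs
    have hsvlt : s.val < n + 1 := ZMod.val_lt s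
    have heq : s.val + n + 2 = t := by
      apply huniq
      exact ⟨Finset.mem_Ico.mpr (by omega), hs⟩
    have hval : (((t - (n + 2) : ℕ) : ZMod (n + 1))).val = t - (n + 2) :=
      ZMod.val_cast_of_lt (by omega)
    have : s.val = (((t - (n + 2) : ℕ) : ZMod (n + 1))).val := by omega
    have h1 : ((s.val : ℕ) : ZMod (n + 1)) = s := by rw [ZMod.natCast_val, ZMod.cast_id]
    have h2 : (((((t - (n + 2) : ℕ) : ZMod (n + 1))).val : ℕ) : ZMod (n + 1))
        = ((t - (n + 2) : ℕ) : ZMod (n + 1)) := by rw [ZMod.natCast_val, ZMod.cast_id]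
    rw [← h1, ← h2, this]

lemma parking_iff_goodVal (f : Fin n → Fin n) (c : ZMod (n + 1)) :
    IsParkingFunction n f ↔
      GoodVal (fun i => (((f i : ℕ) + 1 : ℕ) : ZMod (n + 1)) + c) c := by
  have hpred : ∀ i : Fin n,
      (c - ((((f i : ℕ) + 1 : ℕ) : ZMod (n + 1)) + c)).val = n - (f i : ℕ) := by
    intro i
    have hx : (f i : ℕ) + 1 < n + 1 := by have := (f i).isLt; omega
    have hv : ((((f i : ℕ) + 1 : ℕ)) : ZMod (n + 1)).val = (f i : ℕ) + 1 :=
      ZMod.val_cast_of_lt hx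
    have hne : ((((f i : ℕ) + 1 : ℕ)) : ZMod (n + 1)) ≠ 0 := by
      intro h0; rw [h0] at hv; simp at hv
    have heq : c - ((((f i : ℕ) + 1 : ℕ) : ZMod (n + 1)) + c)
        = -((((f i : ℕ) + 1 : ℕ)) : ZMod (n + 1)) := by ring
    rw [heq, ZMod.neg_val, if_neg hne, hv]
    omega
  have hrel : ∀ L, L ≤ n →
      (Finset.univ.filter fun i : Fin n => (f i : ℕ) + 1 ≤ n - L).card
        + (Finset.univ.filter
            fun i : Fin n =>
              (c - ((((f i : ℕ) + 1 : ℕ) : ZMod (n + 1)) + c)).val ≤ L).card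
        = n := by
    intro L hL
    have hc := Finset.card_filter_add_card_filter_not
      (s := (Finset.univ : Finset (Fin n))) (p := fun i => (f i : ℕ) + 1 ≤ n - L)
    rw [Finset.card_univ, Fintype.card_fin] at hc
    have hfe : (Finset.univ.filter fun i : Fin n => ¬((f i : ℕ) + 1 ≤ n - L))
        = Finset.univ.filter
            fun i : Fin n =>
              (c - ((((f i : ℕ) + 1 : ℕ) : ZMod (n + 1)) + c)).val ≤ L := by
      apply Finset.filter_congr
      intro i _
      rw [hpred i]
      have := (f i).isLt
      constructor <;> intro <;> omega
    rw [hfe] at hc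
    exact hc
  constructor
  · intro hp L hL
    show (Finset.univ.filter
        fun i : Fin n =>
          (c - ((((f i : ℕ) + 1 : ℕ) : ZMod (n + 1)) + c)).val ≤ L).card ≤ L
    have hr := hrel L hL
    by_cases h0 : n - L = 0
    · have hcard : (Finset.univ.filter
          fun i : Fin n =>
            (c - ((((f i : ℕ) + 1 : ℕ) : ZMod (n + 1)) + c)).val ≤ L).card
          ≤ (Finset.univ : Finset (Fin n)).card := Finset.card_filter_le _ _
      rw [Finset.card_univ, Fintype.card_fin] at hcard
      omega
    · have hk := hp (n - L) (Finset.mem_Icc.mpr ⟨by omega, by omega⟩)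
      omega
  · intro hg k hk
    rw [Finset.mem_Icc] at hk
    have hgl := hg (n - k) (by omega)
    have hgl' : (Finset.univ.filter
        fun i : Fin n =>
          (c - ((((f i : ℕ) + 1 : ℕ) : ZMod (n + 1)) + c)).val ≤ n - k).card ≤ n - k := hgl
    have hr := hrel (n - k) (by omega)
    have he : n - (n - k) = k := by omega
    rw [he] at hr
    omega

lemma bijective_pairing (n : ℕ) :
    Function.Bijective
      (fun p : {f : Fin n → Fin n // IsParkingFunction n f} × ZMod (n + 1) =>
        (fun i => (((p.1.1 i : ℕ) + 1 : ℕ) : ZMod (n + 1)) + p.2 : Fin n → ZMod (n + 1))) := by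
  constructor
  · rintro ⟨⟨f, hf⟩, c⟩ ⟨⟨f', hf'⟩, c'⟩ heq
    simp only at heq
    have hg : GoodVal (fun i => (((f i : ℕ) + 1 : ℕ) : ZMod (n + 1)) + c) c :=
      (parking_iff_goodVal f c).mp hf
    have hg' : GoodVal (fun i => (((f' i : ℕ) + 1 : ℕ) : ZMod (n + 1)) + c') c' :=
      (parking_iff_goodVal f' c').mp hf'
    have hg'' : GoodVal (fun i => (((f i : ℕ) + 1 : ℕ) : ZMod (n + 1)) + c) c' := by
      rw [heq]; exact hg'
    obtain ⟨s0, _, huniq⟩ :=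
      existsUnique_goodVal (fun i => (((f i : ℕ) + 1 : ℕ) : ZMod (n + 1)) + c)
    have hcc : c = c' := by rw [huniq c hg, huniq c' hg'']
    subst hcc
    have hff : f = f' := by
      funext i
      have hi := congrFun heq i
      simp only [add_left_inj] at hi
      have h1 : ((((f i : ℕ) + 1 : ℕ)) : ZMod (n + 1)).val = (f i : ℕ) + 1 :=
        ZMod.val_cast_of_lt (by have := (f i).isLt; omega)
      have h2 : ((((f' i : ℕ) + 1 : ℕ)) : ZMod (n + 1)).val = (f' i : ℕ) + 1 :=
        ZMod.val_cast_of_lt (by have := (f' i).isLt; omega)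
      rw [hi, h2] at h1
      exact Fin.ext (by omega)
    subst hff
    rfl
  · intro g
    obtain ⟨s0, hs0, _⟩ := existsUnique_goodVal g
    have h0 := hs0 0 (Nat.zero_le n)
    have hne : ∀ i, (g i - s0).val ≠ 0 := by
      intro i hi0
      have hz : g i - s0 = 0 := (ZMod.val_eq_zero _).mp hi0
      have hz' : s0 - g i = 0 := by rw [← neg_sub, hz, neg_zero]
      have hmem : i ∈ Finset.univ.filter fun j => (s0 - g j).val ≤ 0 :=
        Finset.mem_filter.mpr ⟨Finset.mem_univ i, by rw [hz']; simp⟩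
      have hpos : 0 < (Finset.univ.filter fun j : Fin n => (s0 - g j).val ≤ 0).card :=
        Finset.card_pos.mpr ⟨i, hmem⟩
      omega
    have hlt : ∀ i, (g i - s0).val - 1 < n := by
      intro i
      have := ZMod.val_lt (g i - s0)
      have := hne i
      omega
    set f : Fin n → Fin n := fun i => ⟨(g i - s0).val - 1, hlt i⟩ with hfdef
    have hgf : (fun i => (((f i : ℕ) + 1 : ℕ) : ZMod (n + 1)) + s0) = g := by
      funext i
      have hv1 : (f i : ℕ) + 1 = (g i - s0).val := by
        simp only [hfdef]
        have := hne i
        omega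
      rw [hv1]
      have hv2 : (((g i - s0).val : ℕ) : ZMod (n + 1)) = g i - s0 := by
        rw [ZMod.natCast_val, ZMod.cast_id]
      rw [hv2]
      ring
    have hpark : IsParkingFunction n f :=
      (parking_iff_goodVal f s0).mpr (by rw [hgf]; exact hs0)
    exact ⟨⟨⟨f, hpark⟩, s0⟩, hgf⟩

end ParkingAux

/-- The number of parking functions on `[n]` is `(n+1)^(n-1)`. -/
theorem card_parkingFunctions (n : ℕ) :
    Nat.card {f : Fin n → Fin n // IsParkingFunction n f} = (n + 1) ^ (n - 1) := by
  have e := Equiv.ofBijective _ (ParkingAux.bijective_pairing n)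
  have hc := Nat.card_eq_of_bijective _ (ParkingAux.bijective_pairing n)
  rw [Nat.card_prod, Nat.card_zmod] at hc
  have hfun : Nat.card (Fin n → ZMod (n + 1)) = (n + 1) ^ n := by
    rw [Nat.card_eq_fintype_card, Fintype.card_fun, Fintype.card_fin, ZMod.card]
  rw [hfun] at hc
  have hpow : (n + 1) ^ n = (n + 1) ^ (n - 1) * (n + 1) := by
    cases n with
    | zero => rfl
    | succ k => rw [← pow_succ]; norm_num
  rw [hpow] at hc
  exact Nat.eq_of_mul_eq_mul_right (Nat.succ_pos n) hc
end

section
/- The exponential generating series of parking functions, F(t) = Σ_{n≥0} (n+1)^(n-1) · t^n/n! (with the n = 0 term equal to 1), satisfies the functional equation F(t) = exp(t·F(t)) in the ring of formal power series ℚ[[t]]. -/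
/-!
Write `T = t F`. Both `F` and `exp T` solve `y' = T' y` with `y(0) = 1`: `exp T` by the chain
rule, and `F` because, coefficientwise, `F' = T' F` is Abel's identity
`∑ k, (n choose k) (k+1)^(k-1) (y+n-k)^(n-k) = (y+n+1)^n` at `y = 1`. Abel's identity is a
polynomial identity in `y`, proved by induction on `n`: differentiating in `y` reduces it to the
case `n - 1` at `y + 1`, and both sides vanish at `y = -(n + 1)`, where the left side is an
`n`-th finite difference of a polynomial of degree `n - 1`.
-/

open PowerSeries

/-- Composition `F(g)` of formal power series, valid (i.e., agreeing with the usual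
substitution) whenever the constant term of `g` is zero: the `n`-th coefficient only
depends on `(coeff k F) • g ^ k` for `k ≤ n`, since `g ^ k` then has order `≥ k`. -/
noncomputable def seriesComp (F g : PowerSeries ℚ) : PowerSeries ℚ :=
  PowerSeries.mk fun n =>
    PowerSeries.coeff (R := ℚ) n (∑ k ∈ Finset.range (n + 1), PowerSeries.coeff (R := ℚ) k F • g ^ k)

/-- The exponential generating series of parking functions,
`F(t) = Σ_{n ≥ 0} (n+1)^(n-1) · t^n / n!` (with constant term 1). -/
noncomputable def parkingEGF : PowerSeries ℚ :=
  PowerSeries.mk fun n => ((n + 1) ^ (n - 1) : ℕ) / (n.factorial : ℚ)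

open Finset
open scoped Nat

theorem sum_neg_one_pow_mul_choose_mul_add_pow_eq_zero {R : Type*} [CommRing R] {j n : ℕ}
    (h : j < n) (y : R) :
    ∑ k ∈ range (n + 1), (-1) ^ (n - k) * (n.choose k : R) * (y + k) ^ j = 0 := by
  have := congrFun (fwdDiff_iter_pow_eq_zero_of_lt (R := R) h) y
  rw [fwdDiff_iter_eq_sum_shift] at this
  simpa [zsmul_eq_mul] using this

namespace Polynomial

variable {R : Type*} [CommRing R]

theorem eq_of_derivative_eq_of_eval_eq [IsAddTorsionFree R] {p q : R[X]}
    (hd : derivative p = derivative q) (c : R) (he : p.eval c = q.eval c) : p = q := by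
  have hconst := eq_C_of_derivative_eq_zero (p := p - q) (by rw [derivative_sub, hd, sub_self])
  have h0 : (p - q).coeff 0 = 0 := by
    simpa [he] using (congrArg (eval c) hconst).symm
  rwa [h0, map_zero, sub_eq_zero] at hconst

/-- The left side of Abel's identity at `y = X + c`. -/
noncomputable def abelPoly (n : ℕ) (c : R) : R[X] :=
  ∑ k ∈ range (n + 1),
    ((n.choose k * (k + 1) ^ (k - 1) : ℕ) : R[X]) * (X + C (c + (n - k : ℕ))) ^ (n - k)

theorem derivative_abelPoly_succ (n : ℕ) (c : R) :
    derivative (abelPoly (n + 1) c) = ((n + 1 : ℕ) : R[X]) * abelPoly n (c + 1) := by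
  rw [abelPoly, abelPoly, derivative_sum, sum_range_succ, Nat.sub_self, pow_zero, mul_one,
    derivative_natCast, add_zero, mul_sum]
  refine sum_congr rfl fun k hk => ?_
  have hk : k ≤ n := Nat.lt_succ_iff.mp (mem_range.mp hk)
  have hshift : c + ((n + 1 - k : ℕ) : R) = c + 1 + ((n - k : ℕ) : R) := by
    rw [Nat.sub_add_comm hk, Nat.cast_succ]; ring
  have hchoose := congrArg (fun m : ℕ => ((m * (k + 1) ^ (k - 1) : ℕ) : R[X]))
    (Nat.choose_mul_succ_eq n k)
  rw [derivative_natCast_mul, derivative_pow, derivative_X_add_C, mul_one, hshift,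
    show n + 1 - k - 1 = n - k by omega, C_eq_natCast]
  push_cast at hchoose ⊢
  linear_combination -(X + C (c + 1 + ((n - k : ℕ) : R))) ^ (n - k) * hchoose

theorem eval_abelPoly_succ (n : ℕ) (c : R) :
    (abelPoly (n + 1) c).eval (-(c + (n + 2 : ℕ))) = 0 := by
  rw [abelPoly, eval_finsetSum]
  have hterm : ∀ k ∈ range (n + 2),
      eval (-(c + (n + 2 : ℕ))) ((((n + 1).choose k * (k + 1) ^ (k - 1) : ℕ) : R[X]) *
        (X + C (c + (n + 1 - k : ℕ))) ^ (n + 1 - k))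
        = (-1) ^ (n + 1 - k) * ((n + 1).choose k : R) * (1 + k) ^ n := by
    intro k hk
    have hk : k ≤ n + 1 := Nat.lt_succ_iff.mp (mem_range.mp hk)
    have hbase : -(c + ((n + 2 : ℕ) : R)) + (c + ((n + 1 - k : ℕ) : R)) = -(1 + k) := by
      rw [Nat.cast_sub hk]; push_cast; ring
    have hpow : ((k : R) + 1) ^ (k - 1) * (1 + k) ^ (n + 1 - k) = (1 + k) ^ n := by
      rcases k with _ | k
      · simp
      · rw [add_comm (k + 1 : ℕ).cast 1, ← pow_add]; congr 1; omega
    simp only [eval_mul, eval_pow, eval_add, eval_X, eval_C, eval_natCast, hbase]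
    rw [neg_pow]
    push_cast
    linear_combination (-1) ^ (n + 1 - k) * ((n + 1).choose k : R) * hpow
  rw [sum_congr rfl hterm]
  exact sum_neg_one_pow_mul_choose_mul_add_pow_eq_zero n.lt_succ_self 1

theorem abelPoly_eq [IsAddTorsionFree R] (n : ℕ) (c : R) :
    abelPoly n c = (X + C (c + (n + 1 : ℕ))) ^ n := by
  induction n generalizing c with
  | zero => simp [abelPoly]
  | succ n ih =>
    refine eq_of_derivative_eq_of_eval_eq ?_ (-(c + (n + 2 : ℕ))) ?_
    · rw [derivative_abelPoly_succ, ih, derivative_pow, derivative_X_add_C, mul_one, C_eq_natCast,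
        Nat.add_sub_cancel]
      push_cast; ring_nf
    · have hroot : -(c + ((n + 2 : ℕ) : R)) + (c + ((n + 1 + 1 : ℕ) : R)) = 0 := by
        push_cast; ring
      rw [eval_abelPoly_succ, eval_pow, eval_add, eval_X, eval_C, hroot, zero_pow n.succ_ne_zero]

end Polynomial

theorem Nat.sum_choose_mul_succ_pow_mul_succ_pow (n : ℕ) :
    ∑ k ∈ range (n + 1), n.choose k * (k + 1) ^ (k - 1) * (n - k + 1) ^ (n - k)
      = (n + 2) ^ n := by
  have h := congrArg (Polynomial.eval 1) (Polynomial.abelPoly_eq (R := ℤ) n 0)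
  simp only [Polynomial.abelPoly, Polynomial.eval_finsetSum, Polynomial.eval_mul,
    Polynomial.eval_pow, Polynomial.eval_add, Polynomial.eval_X, Polynomial.eval_C,
    Polynomial.eval_natCast, zero_add] at h
  push_cast at h
  rw [← Nat.cast_inj (R := ℤ)]
  push_cast
  simp only [add_comm (1 : ℤ)] at h
  rw [h]
  ring

namespace PowerSeries

variable {K : Type*} [Field K] [CharZero K]

theorem coeff_mk_div_factorial_mul (a b : ℕ → K) (n : ℕ) :
    coeff n ((mk fun i => a i / i !) * mk fun i => b i / i !)
      = (∑ k ∈ range (n + 1), n.choose k * a k * b (n - k)) / n ! := by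
  rw [coeff_mul, Nat.sum_antidiagonal_eq_sum_range_succ_mk, sum_div]
  refine sum_congr rfl fun k hk => ?_
  rw [coeff_mk, coeff_mk, Nat.cast_choose K (Nat.lt_succ_iff.mp (mem_range.mp hk))]
  have : (n ! : K) ≠ 0 := by exact_mod_cast n.factorial_ne_zero
  field_simp

theorem derivative_mk_div_factorial (a : ℕ → K) :
    d⁄dX K (mk fun i => a i / i !) = mk fun i => a (i + 1) / i ! := by
  ext n
  rw [coeff_derivative, coeff_mk, coeff_mk, Nat.factorial_succ]
  push_cast
  field_simp

theorem eq_of_derivative_eq_mul {f g a : K⟦X⟧} (hf : d⁄dX K f = a * f)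
    (hg : d⁄dX K g = a * g) (h0 : constantCoeff f = constantCoeff g)
    (hf0 : constantCoeff f ≠ 0) : f = g := by
  have hquot : d⁄dX K (g * f⁻¹) = d⁄dX K 1 := by
    rw [Derivation.leibniz, derivative_inv', hf, hg, derivative_one, smul_eq_mul, smul_eq_mul]
    linear_combination (-(g * f⁻¹ * a)) * PowerSeries.mul_inv_cancel f hf0
  have hconst : constantCoeff (g * f⁻¹) = constantCoeff 1 := by
    rw [map_mul, constantCoeff_inv, ← h0, mul_inv_cancel₀ hf0, map_one]
  simpa using (eq_mul_inv_iff_mul_eq hf0).mp (derivative.ext hquot hconst).symm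

end PowerSeries

theorem constantCoeff_seriesComp (F g : ℚ⟦X⟧) :
    constantCoeff (seriesComp F g) = constantCoeff F := by
  simp [seriesComp]

theorem seriesComp_eq_subst {F g : ℚ⟦X⟧} (hg : constantCoeff g = 0) :
    seriesComp F g = F.subst g := by
  ext n
  rw [seriesComp, coeff_mk, coeff_subst' (HasSubst.of_constantCoeff_zero' hg), map_sum,
    finsum_eq_sum_of_support_subset (s := range (n + 1))]
  · simp only [coeff_smul]
  · intro k hk
    by_contra hkn
    have hXk : X ^ k ∣ g ^ k := pow_dvd_pow_of_dvd (X_dvd_iff.mpr hg) k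
    exact hk (show coeff k F • coeff n (g ^ k) = 0 by
      rw [X_pow_dvd_iff.mp hXk n (by simpa using hkn), smul_zero])

theorem constantCoeff_parkingEGF : constantCoeff parkingEGF = 1 := by
  simp [parkingEGF]

theorem derivative_X_mul_parkingEGF :
    d⁄dX ℚ (X * parkingEGF) = mk fun n => ((n : ℚ) + 1) ^ n / n ! := by
  ext n
  rw [coeff_derivative, coeff_succ_X_mul, parkingEGF, coeff_mk, coeff_mk]
  rcases n with _ | n
  · simp
  · push_cast
    rw [div_mul_eq_mul_div, ← pow_succ]

theorem derivative_parkingEGF :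
    d⁄dX ℚ parkingEGF = d⁄dX ℚ (X * parkingEGF) * parkingEGF := by
  have hF : parkingEGF = mk fun n => ((n : ℚ) + 1) ^ (n - 1) / n ! := by
    ext n; simp [parkingEGF]
  rw [derivative_X_mul_parkingEGF, hF, derivative_mk_div_factorial]
  ext n
  rw [coeff_mk, mul_comm, coeff_mk_div_factorial_mul, Nat.add_sub_cancel]
  congr 1
  exact_mod_cast (Nat.sum_choose_mul_succ_pow_mul_succ_pow n).symm

/-- `F(t) = exp (t · F(t))` in `ℚ⟦t⟧`. -/
theorem parkingEGF_eq_exp_comp :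
    parkingEGF = seriesComp (PowerSeries.exp ℚ) (PowerSeries.X * parkingEGF) := by
  have hT : constantCoeff (X * parkingEGF) = 0 := by simp
  refine eq_of_derivative_eq_mul derivative_parkingEGF ?_ ?_ (by simp [constantCoeff_parkingEGF])
  · rw [seriesComp_eq_subst hT, derivative_subst (HasSubst.of_constantCoeff_zero' hT),
      derivative_exp, mul_comm]
  · rw [constantCoeff_seriesComp, constantCoeff_exp, constantCoeff_parkingEGF]
end

section
/- For every natural number n, the sum over all parking functions f on [n] of the product ∏_{i=1}^{n} (m_i)!, where m_i = #f^{-1}(i) is the size of the i-th fiber of f, equals n! · C_n, where C_n is the n-th Catalan number. (Combinatorially: the number of chained hash tables with linked lists on n keys whose hash map is a parking function equals the number of labeled binary trees on n vertices.) -/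
instance (n : ℕ) : DecidablePred (IsParkingFunction n) := fun f => by
  unfold IsParkingFunction; infer_instance

/-- `m_i = #f⁻¹(i)`, the size of the fiber of `f` over `i`. -/
def fiberCard (n : ℕ) (f : Fin n → Fin n) (i : Fin n) : ℕ :=
  (Finset.univ.filter fun j => f j = i).card

open Finset

/-! ### Auxiliary: counting -/

lemma PFaux.card_filter_comp {n : ℕ} (σ : Equiv.Perm (Fin n)) (q : Fin n → Prop)
    [DecidablePred q] :
    (univ.filter fun j => q (σ j)).card = (univ.filter q).card := by
  apply Finset.card_bij (fun j _ => σ j)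
  · intro a ha
    simp only [mem_filter, mem_univ, true_and] at ha ⊢
    exact ha
  · intro a _ b _ h
    exact σ.injective h
  · intro b hb
    refine ⟨σ⁻¹ b, ?_, by simp⟩
    simp only [mem_filter, mem_univ, true_and] at hb ⊢
    simpa using hb

lemma PFaux.card_filter_coe_lt {n : ℕ} (k : ℕ) (hk : k ≤ n) :
    (univ.filter fun j : Fin n => (j : ℕ) < k).card = k := by
  have : (univ.filter fun j : Fin n => (j : ℕ) < k)
      = (univ : Finset (Fin k)).map (Fin.castLEEmb hk) := by
    ext j
    simp only [mem_filter, mem_univ, true_and, mem_map]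
    constructor
    · intro hj
      refine ⟨⟨(j : ℕ), hj⟩, ?_⟩
      apply Fin.ext
      simp
    · rintro ⟨a, -, rfl⟩
      simpa using a.isLt
  rw [this, Finset.card_map, Finset.card_univ, Fintype.card_fin]

/-! ### Parking is invariant under permuting the domain -/

lemma PFaux.isParkingFunction_comp_iff {n : ℕ} (f : Fin n → Fin n) (σ : Equiv.Perm (Fin n)) :
    IsParkingFunction n (f ∘ σ) ↔ IsParkingFunction n f := by
  unfold IsParkingFunction
  refine forall₂_congr fun k _ => ?_
  rw [show (univ.filter fun i => ((f ∘ σ) i : ℕ) + 1 ≤ k)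
      = (univ.filter fun i => (f (σ i) : ℕ) + 1 ≤ k) from rfl,
    PFaux.card_filter_comp σ (fun i => (f i : ℕ) + 1 ≤ k)]

lemma PFaux.fiberCard_comp {n : ℕ} (f : Fin n → Fin n) (σ : Equiv.Perm (Fin n)) (i : Fin n) :
    fiberCard n (f ∘ σ) i = fiberCard n f i := by
  unfold fiberCard
  exact PFaux.card_filter_comp σ (fun j => f j = i)

/-! ### Monotone parking functions -/

/-- For monotone `g`, being a parking function is equivalent to `g i ≤ i`. -/
lemma PFaux.isParkingFunction_iff_of_monotone {n : ℕ} {g : Fin n → Fin n} (hg : Monotone g) :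
    IsParkingFunction n g ↔ ∀ i : Fin n, (g i : ℕ) ≤ (i : ℕ) := by
  constructor
  · intro hp i
    by_contra hlt
    push_neg at hlt
    have hk : (i : ℕ) + 1 ∈ Finset.Icc 1 n := by
      simp only [Finset.mem_Icc]
      exact ⟨Nat.succ_le_succ (Nat.zero_le _), i.isLt⟩
    have h1 := hp _ hk
    have hsub : (univ.filter fun j => (g j : ℕ) + 1 ≤ (i : ℕ) + 1)
        ⊆ (univ.filter fun j : Fin n => (j : ℕ) < (i : ℕ)) := by
      intro j hj
      simp only [mem_filter, mem_univ, true_and] at hj ⊢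
      by_contra hji
      push_neg at hji
      have : g i ≤ g j := hg (by exact Fin.le_def.mpr hji)
      have := Fin.le_def.mp this
      omega
    have h2 := Finset.card_le_card hsub
    rw [PFaux.card_filter_coe_lt (i : ℕ) (le_of_lt i.isLt)] at h2
    omega
  · intro hb k hk
    simp only [Finset.mem_Icc] at hk
    have hsub : (univ.filter fun j : Fin n => (j : ℕ) < k)
        ⊆ (univ.filter fun j => (g j : ℕ) + 1 ≤ k) := by
      intro j hj
      simp only [mem_filter, mem_univ, true_and] at hj ⊢
      have := hb j
      omega
    have h2 := Finset.card_le_card hsub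
    rwa [PFaux.card_filter_coe_lt k hk.2] at h2

/-- The finset of "staircase" monotone functions (monotone parking functions). -/
def PFaux.MSet (n : ℕ) : Finset (Fin n → Fin n) :=
  univ.filter fun g => (∀ i j : Fin n, i ≤ j → g i ≤ g j) ∧ ∀ i : Fin n, (g i : ℕ) ≤ (i : ℕ)

lemma PFaux.mem_MSet {n : ℕ} {g : Fin n → Fin n} :
    g ∈ PFaux.MSet n ↔ Monotone g ∧ ∀ i : Fin n, (g i : ℕ) ≤ (i : ℕ) := by
  unfold PFaux.MSet
  simp only [mem_filter, mem_univ, true_and]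
  constructor
  · exact fun ⟨h1, h2⟩ => ⟨fun i j hij => h1 i j hij, h2⟩
  · exact fun ⟨h1, h2⟩ => ⟨fun i j hij => h1 hij, h2⟩

/-! ### The weighted count over an orbit -/

/-- For monotone `g`, the number of rearrangements of `g` times `∏ (m_i)!` is `n!`. -/
lemma PFaux.card_orbit_mul_weight {n : ℕ} {g : Fin n → Fin n} (hg : Monotone g) :
    (univ.filter fun f : Fin n → Fin n => f ∘ Tuple.sort f = g).card
      * ∏ i : Fin n, (fiberCard n g i).factorial = n.factorial := by
  classical
  have hsg : g ∘ Tuple.sort g = g := by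
    rw [Tuple.sort_eq_refl_iff_monotone.mpr hg]
    rfl
  have hmem : ∀ σ : Equiv.Perm (Fin n),
      g ∘ σ ∈ (univ.filter fun f : Fin n → Fin n => f ∘ Tuple.sort f = g) := by
    intro σ
    simp only [mem_filter, mem_univ, true_and]
    rw [Tuple.comp_perm_comp_sort_eq_comp_sort, hsg]
  have key := Finset.card_eq_sum_card_fiberwise
    (f := fun σ : Equiv.Perm (Fin n) => g ∘ σ)
    (s := univ) (t := univ.filter fun f : Fin n → Fin n => f ∘ Tuple.sort f = g)
    (fun σ _ => hmem σ)
  have hcard : (univ : Finset (Equiv.Perm (Fin n))).card = n.factorial := by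
    rw [Finset.card_univ, Fintype.card_perm, Fintype.card_fin]
  -- each fiber has cardinality ∏ (m_i)!
  have hfib : ∀ f ∈ (univ.filter fun f : Fin n → Fin n => f ∘ Tuple.sort f = g),
      (univ.filter fun σ : Equiv.Perm (Fin n) => g ∘ σ = f).card
        = ∏ i : Fin n, (fiberCard n g i).factorial := by
    intro f hf
    simp only [mem_filter, mem_univ, true_and] at hf
    set σ₀ : Equiv.Perm (Fin n) := (Tuple.sort f)⁻¹ with hσ₀
    have hgf : g ∘ σ₀ = f := by
      funext x
      have := congrFun hf (σ₀ x)
      simp only [Function.comp_apply] at this ⊢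
      rw [← this]
      congr 1
      simp [hσ₀]
    have hbij : (univ.filter fun σ : Equiv.Perm (Fin n) => g ∘ σ = f).card
        = (univ.filter fun τ : Equiv.Perm (Fin n) => g ∘ τ = g).card := by
      apply Finset.card_bij (fun σ _ => σ * σ₀⁻¹)
      · intro σ hσ
        simp only [mem_filter, mem_univ, true_and] at hσ ⊢
        funext x
        have h1 := congrFun hσ ((σ₀⁻¹ : Equiv.Perm (Fin n)) x)
        have h2 := congrFun hgf ((σ₀⁻¹ : Equiv.Perm (Fin n)) x)
        simp only [Function.comp_apply, Equiv.Perm.coe_mul] at h1 h2 ⊢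
        rw [h1, ← h2]
        simp
      · intro a _ b _ h
        exact mul_right_cancel h
      · intro τ hτ
        refine ⟨τ * σ₀, ?_, by group⟩
        simp only [mem_filter, mem_univ, true_and] at hτ ⊢
        funext x
        have := congrFun hτ (σ₀ x)
        simp only [Function.comp_apply, Equiv.Perm.coe_mul] at this ⊢
        rw [this, ← congrFun hgf x]
        rfl
    rw [hbij]
    have hprod : (∏ i : Fin n, (fiberCard n g i).factorial)
        = Fintype.card {σ : Equiv.Perm (Fin n) // g ∘ σ = g} := by
      rw [DomMulAct.stabilizer_card (f := g)]
      apply Finset.prod_congr rfl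
      intro i _
      congr 1
      unfold fiberCard
      rw [Fintype.card_subtype]
    rw [hprod, Fintype.card_subtype]
  rw [hcard] at key
  rw [key, Finset.sum_congr rfl hfib, Finset.sum_const, smul_eq_mul]

/-! ### First-touch decomposition of staircase functions -/

/-- The "touch" predicate: the path touches the diagonal after step `j+1`. -/
def PFaux.ftP (n : ℕ) (g : Fin (n + 1) → Fin (n + 1)) (j : ℕ) : Prop :=
  j = n ∨ ∃ h : j + 1 < n + 1, (g ⟨j + 1, h⟩ : ℕ) = j + 1

instance (n : ℕ) (g : Fin (n + 1) → Fin (n + 1)) : DecidablePred (PFaux.ftP n g) := fun j => by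
  unfold PFaux.ftP; infer_instance

lemma PFaux.ftP_exists (n : ℕ) (g : Fin (n + 1) → Fin (n + 1)) : ∃ j, PFaux.ftP n g j :=
  ⟨n, Or.inl rfl⟩

/-- First touch of the diagonal. -/
def PFaux.ft (n : ℕ) (g : Fin (n + 1) → Fin (n + 1)) : ℕ :=
  Nat.find (PFaux.ftP_exists n g)

lemma PFaux.ft_le (n : ℕ) (g : Fin (n + 1) → Fin (n + 1)) : PFaux.ft n g ≤ n :=
  Nat.find_le (Or.inl rfl)

lemma PFaux.ft_eq_iff {n : ℕ} {g : Fin (n + 1) → Fin (n + 1)} {k : ℕ} :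
    PFaux.ft n g = k ↔ PFaux.ftP n g k ∧ ∀ j < k, ¬ PFaux.ftP n g j :=
  Nat.find_eq_iff _

/-- Value of glued function, as a natural number. -/
def PFaux.glueVal (n k : ℕ) (p1 : Fin k → Fin k) (p2 : Fin (n - k) → Fin (n - k)) (j : ℕ) : ℕ :=
  if j = 0 then 0
  else if h1 : j - 1 < k then (p1 ⟨j - 1, h1⟩ : ℕ)
  else if h2 : j - k - 1 < n - k then k + 1 + (p2 ⟨j - k - 1, h2⟩ : ℕ)
  else 0

lemma PFaux.glueVal_lt {n k : ℕ} (hk : k ≤ n) (p1 : Fin k → Fin k)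
    (p2 : Fin (n - k) → Fin (n - k)) (j : ℕ) :
    PFaux.glueVal n k p1 p2 j < n + 1 := by
  unfold PFaux.glueVal
  split_ifs with h0 h1 h2
  · omega
  · have := (p1 ⟨j - 1, h1⟩).isLt; omega
  · have := (p2 ⟨j - k - 1, h2⟩).isLt; omega
  · omega

/-- Glue two staircase functions into one (inverse of the first-touch decomposition). -/
def PFaux.glue (n k : ℕ) (hk : k ≤ n) (p1 : Fin k → Fin k) (p2 : Fin (n - k) → Fin (n - k)) :
    Fin (n + 1) → Fin (n + 1) :=
  fun j => ⟨PFaux.glueVal n k p1 p2 (j : ℕ), PFaux.glueVal_lt hk p1 p2 (j : ℕ)⟩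

/-- First piece of the cut. -/
def PFaux.cut1 (n k : ℕ) (g : Fin (n + 1) → Fin (n + 1)) : Fin k → Fin k :=
  fun i => ⟨min (if h : (i : ℕ) + 1 < n + 1 then (g ⟨(i : ℕ) + 1, h⟩ : ℕ) else 0) (k - 1),
    by have := i.isLt; omega⟩

/-- Second piece of the cut. -/
def PFaux.cut2 (n k : ℕ) (g : Fin (n + 1) → Fin (n + 1)) : Fin (n - k) → Fin (n - k) :=
  fun t => ⟨min ((if h : k + 1 + (t : ℕ) < n + 1 then (g ⟨k + 1 + (t : ℕ), h⟩ : ℕ) else 0)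
      - (k + 1)) (n - k - 1),
    by have := t.isLt; omega⟩

/-- Cardinality of the fiber of the first-touch map. -/
lemma PFaux.card_ft_fiber (n k : ℕ) (hk : k ≤ n) :
    ((PFaux.MSet (n + 1)).filter fun g => PFaux.ft n g = k).card
      = (PFaux.MSet k).card * (PFaux.MSet (n - k)).card := by
  classical
  rw [← Finset.card_product]
  apply Finset.card_bij' (fun g _ => (PFaux.cut1 n k g, PFaux.cut2 n k g))
    (fun p _ => PFaux.glue n k hk p.1 p.2)
  -- forward map lands in the product
  · intro g hg
    rw [mem_filter] at hg
    obtain ⟨hgM, hft⟩ := hg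
    rw [PFaux.mem_MSet] at hgM
    obtain ⟨hmono, hb⟩ := hgM
    rw [PFaux.ft_eq_iff] at hft
    obtain ⟨htouch, hbefore⟩ := hft
    -- facts
    have hlt : ∀ j (hj : j < k) (h1 : j + 1 < n + 1), (g ⟨j + 1, h1⟩ : ℕ) ≤ j := by
      intro j hj h1
      have hnt := hbefore j hj
      unfold PFaux.ftP at hnt
      push_neg at hnt
      have := hnt.2 h1
      have := hb ⟨j + 1, h1⟩
      simp only at this
      omega
    have htch : ∀ (h1 : k + 1 < n + 1), (g ⟨k + 1, h1⟩ : ℕ) = k + 1 := by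
      intro h1
      unfold PFaux.ftP at htouch
      rcases htouch with h | ⟨h2, h3⟩
      · omega
      · exact h3
    rw [Finset.mem_product]
    constructor
    · rw [PFaux.mem_MSet]
      constructor
      · intro i j hij
        rw [Fin.le_def] at hij ⊢
        unfold PFaux.cut1
        simp only
        have h1 : (i : ℕ) + 1 < n + 1 := by have := i.isLt; omega
        have h2 : (j : ℕ) + 1 < n + 1 := by have := j.isLt; omega
        rw [dif_pos h1, dif_pos h2]
        have := Fin.le_def.mp (hmono (a := ⟨(i : ℕ) + 1, h1⟩) (b := ⟨(j : ℕ) + 1, h2⟩)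
          (Fin.le_def.mpr (by simp; omega)))
        omega
      · intro i
        unfold PFaux.cut1
        simp only
        have h1 : (i : ℕ) + 1 < n + 1 := by have := i.isLt; omega
        rw [dif_pos h1]
        have := hlt (i : ℕ) i.isLt h1
        omega
    · rw [PFaux.mem_MSet]
      have hge : ∀ t : Fin (n - k), ∀ (h1 : k + 1 + (t : ℕ) < n + 1),
          k + 1 ≤ (g ⟨k + 1 + (t : ℕ), h1⟩ : ℕ) := by
        intro t h1
        have hkn : k + 1 < n + 1 := by have := t.isLt; omega
        have := Fin.le_def.mp (hmono (a := ⟨k + 1, hkn⟩) (b := ⟨k + 1 + (t : ℕ), h1⟩)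
          (Fin.le_def.mpr (by simp)))
        have := htch hkn
        omega
      constructor
      · intro i j hij
        rw [Fin.le_def] at hij ⊢
        unfold PFaux.cut2
        simp only
        have h1 : k + 1 + (i : ℕ) < n + 1 := by have := i.isLt; omega
        have h2 : k + 1 + (j : ℕ) < n + 1 := by have := j.isLt; omega
        rw [dif_pos h1, dif_pos h2]
        have := Fin.le_def.mp (hmono (a := ⟨k + 1 + (i : ℕ), h1⟩) (b := ⟨k + 1 + (j : ℕ), h2⟩)
          (Fin.le_def.mpr (by simp; omega)))
        have := hge i h1
        omega
      · intro t
        unfold PFaux.cut2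
        simp only
        have h1 : k + 1 + (t : ℕ) < n + 1 := by have := t.isLt; omega
        rw [dif_pos h1]
        have := hb ⟨k + 1 + (t : ℕ), h1⟩
        simp only at this
        omega
  -- backward map lands in the fiber
  · intro p hp
    rw [Finset.mem_product] at hp
    obtain ⟨hp1, hp2⟩ := hp
    rw [PFaux.mem_MSet] at hp1 hp2
    obtain ⟨hm1, hb1⟩ := hp1
    obtain ⟨hm2, hb2⟩ := hp2
    rw [mem_filter]
    have hval : ∀ j : Fin (n + 1), (PFaux.glue n k hk p.1 p.2 j : ℕ)
        = PFaux.glueVal n k p.1 p.2 (j : ℕ) := fun j => rfl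
    -- basic value facts
    have hv0 : PFaux.glueVal n k p.1 p.2 0 = 0 := by unfold PFaux.glueVal; simp
    have hv1 : ∀ j, 1 ≤ j → j ≤ k → ∀ (h1 : j - 1 < k),
        PFaux.glueVal n k p.1 p.2 j = (p.1 ⟨j - 1, h1⟩ : ℕ) := by
      intro j hj1 hjk h1
      unfold PFaux.glueVal
      rw [if_neg (by omega), dif_pos h1]
    have hv2 : ∀ j, k + 1 ≤ j → j ≤ n → ∀ (h2 : j - k - 1 < n - k),
        PFaux.glueVal n k p.1 p.2 j = k + 1 + (p.2 ⟨j - k - 1, h2⟩ : ℕ) := by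
      intro j hj1 hjn h2
      unfold PFaux.glueVal
      rw [if_neg (by omega), dif_neg (by omega), dif_pos h2]
    have hbound : ∀ j : Fin (n + 1), (PFaux.glue n k hk p.1 p.2 j : ℕ) ≤ (j : ℕ) := by
      intro j
      rw [hval]
      rcases Nat.eq_zero_or_pos (j : ℕ) with h | h
      · rw [h, hv0]
      · rcases le_or_gt (j : ℕ) k with h' | h'
        · have h1 : (j : ℕ) - 1 < k := by omega
          rw [hv1 _ h h' h1]
          have := hb1 ⟨(j : ℕ) - 1, h1⟩
          simp only at this
          omega
        · have h2 : (j : ℕ) - k - 1 < n - k := by have := j.isLt; omega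
          rw [hv2 _ (by omega) (by have := j.isLt; omega) h2]
          have := hb2 ⟨(j : ℕ) - k - 1, h2⟩
          simp only at this
          omega
    constructor
    · rw [PFaux.mem_MSet]
      refine ⟨?_, hbound⟩
      intro i j hij
      rw [Fin.le_def] at hij
      rw [Fin.le_def, hval, hval]
      rcases Nat.eq_zero_or_pos (i : ℕ) with hi | hi
      · rw [hi, hv0]; omega
      rcases le_or_gt (j : ℕ) k with hjk | hjk
      · -- both in middle branch
        have hik : (i : ℕ) ≤ k := le_trans hij hjk
        have h1i : (i : ℕ) - 1 < k := by omega
        have h1j : (j : ℕ) - 1 < k := by omega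
        rw [hv1 _ hi hik h1i, hv1 _ (by omega) hjk h1j]
        exact Fin.le_def.mp (hm1 (Fin.le_def.mpr (by simp; omega)))
      · have h2j : (j : ℕ) - k - 1 < n - k := by have := j.isLt; omega
        have hjn : (j : ℕ) ≤ n := by have := j.isLt; omega
        rcases le_or_gt (i : ℕ) k with hik | hik
        · have h1i : (i : ℕ) - 1 < k := by omega
          rw [hv1 _ hi hik h1i, hv2 _ (by omega) hjn h2j]
          have := (p.1 ⟨(i : ℕ) - 1, h1i⟩).isLt
          omega
        · have h2i : (i : ℕ) - k - 1 < n - k := by have := i.isLt; omega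
          rw [hv2 _ (by omega) (by have := i.isLt; omega) h2i, hv2 _ (by omega) hjn h2j]
          have := Fin.le_def.mp (hm2 (a := ⟨(i : ℕ) - k - 1, h2i⟩) (b := ⟨(j : ℕ) - k - 1, h2j⟩)
            (Fin.le_def.mpr (by simp; omega)))
          omega
    · rw [PFaux.ft_eq_iff]
      constructor
      · unfold PFaux.ftP
        rcases eq_or_lt_of_le hk with h | h
        · exact Or.inl h
        · right
          refine ⟨by omega, ?_⟩
          rw [hval, hv2 (k + 1) le_rfl (by omega) (by omega)]
          have := hb2 ⟨k + 1 - k - 1, by omega⟩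
          simp only at this
          omega
      · intro j hj
        unfold PFaux.ftP
        push_neg
        refine ⟨by omega, ?_⟩
        intro h1
        rw [hval, hv1 (j + 1) (by omega) (by omega) (by omega)]
        have := hb1 ⟨j + 1 - 1, by omega⟩
        simp only at this
        omega
  -- left inverse : glue (cut g) = g
  · intro g hg
    rw [mem_filter] at hg
    obtain ⟨hgM, hft⟩ := hg
    rw [PFaux.mem_MSet] at hgM
    obtain ⟨hmono, hb⟩ := hgM
    rw [PFaux.ft_eq_iff] at hft
    obtain ⟨htouch, hbefore⟩ := hft
    have hlt : ∀ j (hj : j < k) (h1 : j + 1 < n + 1), (g ⟨j + 1, h1⟩ : ℕ) ≤ j := by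
      intro j hj h1
      have hnt := hbefore j hj
      unfold PFaux.ftP at hnt
      push_neg at hnt
      have := hnt.2 h1
      have := hb ⟨j + 1, h1⟩
      simp only at this
      omega
    have htch : ∀ (h1 : k + 1 < n + 1), (g ⟨k + 1, h1⟩ : ℕ) = k + 1 := by
      intro h1
      unfold PFaux.ftP at htouch
      rcases htouch with h | ⟨h2, h3⟩
      · omega
      · exact h3
    funext x
    apply Fin.ext
    show PFaux.glueVal n k _ _ (x : ℕ) = (g x : ℕ)
    rcases Nat.eq_zero_or_pos (x : ℕ) with h0 | h0
    · unfold PFaux.glueVal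
      rw [if_pos h0]
      have := hb x
      omega
    rcases le_or_gt (x : ℕ) k with hxk | hxk
    · unfold PFaux.glueVal
      rw [if_neg (by omega), dif_pos (by omega : (x : ℕ) - 1 < k)]
      unfold PFaux.cut1
      simp only
      have h1 : (x : ℕ) - 1 + 1 < n + 1 := by omega
      rw [dif_pos h1]
      have hle := hlt ((x : ℕ) - 1) (by omega) h1
      have hxeq : (⟨(x : ℕ) - 1 + 1, h1⟩ : Fin (n + 1)) = x := by
        apply Fin.ext; simp; omega
      rw [hxeq]
      have : (g x : ℕ) ≤ k - 1 := by rw [hxeq] at hle; omega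
      omega
    · have hxn : (x : ℕ) < n + 1 := x.isLt
      have hkn : k + 1 < n + 1 := by omega
      have hge : k + 1 ≤ (g x : ℕ) := by
        have := Fin.le_def.mp (hmono (a := ⟨k + 1, hkn⟩) (b := x)
          (Fin.le_def.mpr (by simp; omega)))
        have := htch hkn
        omega
      unfold PFaux.glueVal
      rw [if_neg (by omega), dif_neg (by omega), dif_pos (by omega : (x : ℕ) - k - 1 < n - k)]
      unfold PFaux.cut2
      simp only
      have h1 : k + 1 + ((x : ℕ) - k - 1) < n + 1 := by omega
      rw [dif_pos h1]
      have hxeq : (⟨k + 1 + ((x : ℕ) - k - 1), h1⟩ : Fin (n + 1)) = x := by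
        apply Fin.ext; simp; omega
      rw [hxeq]
      have hub := hb x
      omega
  -- right inverse : cut (glue p) = p
  · intro p hp
    rw [Finset.mem_product] at hp
    obtain ⟨hp1, hp2⟩ := hp
    rw [PFaux.mem_MSet] at hp1 hp2
    obtain ⟨hm1, hb1⟩ := hp1
    obtain ⟨hm2, hb2⟩ := hp2
    have hcut1 : PFaux.cut1 n k (PFaux.glue n k hk p.1 p.2) = p.1 := by
      funext i
      apply Fin.ext
      unfold PFaux.cut1
      simp only
      have h1 : (i : ℕ) + 1 < n + 1 := by have := i.isLt; omega
      rw [dif_pos h1]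
      show min (PFaux.glueVal n k p.1 p.2 ((i : ℕ) + 1)) (k - 1) = (p.1 i : ℕ)
      unfold PFaux.glueVal
      rw [if_neg (by omega), dif_pos (by have := i.isLt; omega : (i : ℕ) + 1 - 1 < k)]
      have : (⟨(i : ℕ) + 1 - 1, by have := i.isLt; omega⟩ : Fin k) = i := by
        apply Fin.ext; simp
      rw [this]
      have := hb1 i
      have := i.isLt
      omega
    have hcut2 : PFaux.cut2 n k (PFaux.glue n k hk p.1 p.2) = p.2 := by
      funext t
      apply Fin.ext
      unfold PFaux.cut2
      simp only
      have h1 : k + 1 + (t : ℕ) < n + 1 := by have := t.isLt; omega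
      rw [dif_pos h1]
      show min (PFaux.glueVal n k p.1 p.2 (k + 1 + (t : ℕ)) - (k + 1)) (n - k - 1)
        = (p.2 t : ℕ)
      unfold PFaux.glueVal
      rw [if_neg (by omega), dif_neg (by omega),
        dif_pos (by have := t.isLt; omega : k + 1 + (t : ℕ) - k - 1 < n - k)]
      have : (⟨k + 1 + (t : ℕ) - k - 1, by have := t.isLt; omega⟩ : Fin (n - k)) = t := by
        apply Fin.ext; simp; omega
      rw [this]
      have := hb2 t
      have := t.isLt
      omega
    exact Prod.ext hcut1 hcut2

/-- The number of staircase functions is the Catalan number. -/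
lemma PFaux.card_MSet (n : ℕ) : (PFaux.MSet n).card = catalan n := by
  induction n using Nat.strong_induction_on with
  | _ n ih =>
    match n with
    | 0 =>
      rw [catalan_zero]
      have : PFaux.MSet 0 = univ := by
        unfold PFaux.MSet
        apply Finset.filter_true_of_mem
        intro g _
        exact ⟨fun i => i.elim0, fun i => i.elim0⟩
      rw [this, Finset.card_univ]
      simp
    | (m + 1) =>
      have hmap : ∀ g ∈ PFaux.MSet (m + 1), PFaux.ft m g ∈ Finset.range (m + 1) := by
        intro g _
        rw [Finset.mem_range]
        have := PFaux.ft_le m g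
        omega
      rw [Finset.card_eq_sum_card_fiberwise hmap, catalan_succ']
      rw [Nat.sum_antidiagonal_eq_sum_range_succ (f := fun x y => catalan x * catalan y)]
      apply Finset.sum_congr rfl
      intro k hk
      rw [Finset.mem_range] at hk
      have hk' : k ≤ m := by omega
      rw [PFaux.card_ft_fiber m k hk', ih k (by omega), ih (m - k) (by omega)]

/-! ### Main theorem -/

/-- `Σ_{f parking function on [n]} Π_i (m_i)! = n! · C_n`,
where `C_n` is the `n`-th Catalan number. -/
theorem sum_parkingFunctions_prod_factorial_fibers (n : ℕ) :
    ∑ f : {f : Fin n → Fin n // IsParkingFunction n f},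
      ∏ i : Fin n, (fiberCard n f.1 i).factorial =
    n.factorial * catalan n := by
  classical
  have hsum : (∑ f ∈ univ.filter (IsParkingFunction n),
        ∏ i : Fin n, (fiberCard n f i).factorial)
      = ∑ f : {f : Fin n → Fin n // IsParkingFunction n f},
          ∏ i : Fin n, (fiberCard n f.1 i).factorial :=
    Finset.sum_subtype _ (fun x => by simp) _
  rw [← hsum]
  -- map each parking function to its monotone rearrangement
  have hmap : ∀ f ∈ univ.filter (IsParkingFunction n),
      f ∘ Tuple.sort f ∈ PFaux.MSet n := by
    intro f hf
    rw [mem_filter] at hf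
    rw [PFaux.mem_MSet]
    refine ⟨Tuple.monotone_sort f, ?_⟩
    rw [← PFaux.isParkingFunction_iff_of_monotone (Tuple.monotone_sort f)]
    exact (PFaux.isParkingFunction_comp_iff f (Tuple.sort f)).mpr hf.2
  rw [← Finset.sum_fiberwise_of_maps_to hmap]
  have hinner : ∀ g ∈ PFaux.MSet n,
      (∑ f ∈ (univ.filter (IsParkingFunction n)).filter (fun f => f ∘ Tuple.sort f = g),
        ∏ i : Fin n, (fiberCard n f i).factorial) = n.factorial := by
    intro g hg
    rw [PFaux.mem_MSet] at hg
    obtain ⟨hmono, hb⟩ := hg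
    have hgpark : IsParkingFunction n g :=
      (PFaux.isParkingFunction_iff_of_monotone hmono).mpr hb
    -- the double filter equals the plain sort-fiber
    have hTeq : (univ.filter (IsParkingFunction n)).filter (fun f => f ∘ Tuple.sort f = g)
        = univ.filter (fun f : Fin n → Fin n => f ∘ Tuple.sort f = g) := by
      ext f
      simp only [mem_filter, mem_univ, true_and, and_iff_right_iff_imp]
      intro hsort
      have hfg : f = g ∘ ⇑((Tuple.sort f)⁻¹) := by
        funext x
        have := congrFun hsort ((Tuple.sort f)⁻¹ x)
        simp only [Function.comp_apply] at this ⊢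
        rw [← this]
        congr 1
        simp
      rw [hfg]
      exact (PFaux.isParkingFunction_comp_iff g ((Tuple.sort f)⁻¹)).mpr hgpark
    rw [hTeq]
    -- all summands are equal to ∏ (fiberCard g i)!
    have hconst : ∀ f ∈ univ.filter (fun f : Fin n → Fin n => f ∘ Tuple.sort f = g),
        (∏ i : Fin n, (fiberCard n f i).factorial)
          = ∏ i : Fin n, (fiberCard n g i).factorial := by
      intro f hf
      rw [mem_filter] at hf
      have hfg : f = g ∘ ⇑((Tuple.sort f)⁻¹) := by
        funext x
        have := congrFun hf.2 ((Tuple.sort f)⁻¹ x)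
        simp only [Function.comp_apply] at this ⊢
        rw [← this]
        congr 1
        simp
      apply Finset.prod_congr rfl
      intro i _
      rw [hfg, PFaux.fiberCard_comp]
    rw [Finset.sum_congr rfl hconst, Finset.sum_const, smul_eq_mul]
    exact PFaux.card_orbit_mul_weight hmono
  rw [Finset.sum_congr rfl hinner, Finset.sum_const, smul_eq_mul, PFaux.card_MSet, mul_comm]
end

section
/- Let χ : ℕ_{>0} → ℕ be a non-decreasing function. For n ≥ 1, the number p_χ(n) of χ-parking functions on [n] satisfies the recurrence p_χ(n) = Σ_{j=1}^{n} binom(n, j) · χ(1)^j · p_{ρ_j}(n − j), where ρ_j : ℕ_{>0} → ℕ is defined by ρ_j(m) = χ(j + m) − χ(1), and with the convention p_ψ(0) = 1 for every non-decreasing ψ. -/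
open Finset

/-- A `χ`-parking function on `[n]` (for `χ : ℕ_{>0} → ℕ`, modeled as `χ : ℕ → ℕ`
whose value at `0` is irrelevant): a function `f : [n] → ℕ_{>0}` such that for all
`1 ≤ k ≤ n`, at least `k` indices `i` satisfy `f i ≤ χ k`. -/
def IsChiParkingFunction (χ : ℕ → ℕ) (n : ℕ) (f : Fin n → ℕ) : Prop :=
  (∀ i, 1 ≤ f i) ∧
    ∀ k ∈ Finset.Icc 1 n, k ≤ (Finset.univ.filter fun i => f i ≤ χ k).card

/-- `p_χ(n)`, the number of `χ`-parking functions on `[n]` (`p_χ(0) = 1`). -/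
noncomputable def pCount (χ : ℕ → ℕ) (n : ℕ) : ℕ :=
  Nat.card {f : Fin n → ℕ // IsChiParkingFunction χ n f}

lemma parking_bound {χ : ℕ → ℕ} {n : ℕ} {f : Fin n → ℕ}
    (hf : IsChiParkingFunction χ n f) (hn : 1 ≤ n) (i : Fin n) : f i ≤ χ n := by
  have h := hf.2 n (by simp [hn])
  have hfull : (Finset.univ.filter fun i => f i ≤ χ n) = Finset.univ := by
    apply Finset.eq_univ_of_card
    refine le_antisymm (Finset.card_le_univ _) ?_
    simpa using h
  have hi : i ∈ Finset.univ.filter fun i => f i ≤ χ n := by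
    rw [hfull]; exact Finset.mem_univ i
  exact (Finset.mem_filter.1 hi).2

instance parking_finite (χ : ℕ → ℕ) (n : ℕ) :
    Finite {f : Fin n → ℕ // IsChiParkingFunction χ n f} := by
  rcases Nat.eq_zero_or_pos n with rfl | hn
  · infer_instance
  · apply Finite.of_injective
      (fun x : {f : Fin n → ℕ // IsChiParkingFunction χ n f} =>
        fun i => (⟨x.1 i, Nat.lt_succ_of_le (parking_bound x.2 hn i)⟩ : Fin (χ n + 1)))
    intro x y hxy
    ext i
    have := congrFun hxy i
    simpa [Fin.ext_iff] using this

lemma card_transfer {n m : ℕ} (f : Fin n → ℕ) (S : Finset (Fin n))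
    (e : Fin m ≃ ↥(Sᶜ)) (c : ℕ) :
    ((Finset.univ : Finset (Fin m)).filter fun κ => f (e κ) ≤ c).card
      = (Sᶜ.filter fun i => f i ≤ c).card := by
  refine Finset.card_bij' (fun κ _ => ((e κ : Fin n)))
    (fun i hi => e.symm ⟨i, (Finset.mem_filter.1 hi).1⟩) ?_ ?_ ?_ ?_
  · intro κ hκ
    refine Finset.mem_filter.2 ⟨(e κ).2, ?_⟩
    exact (Finset.mem_filter.1 hκ).2
  · intro i hi
    refine Finset.mem_filter.2 ⟨Finset.mem_univ _, ?_⟩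
    rw [Equiv.apply_symm_apply]
    exact (Finset.mem_filter.1 hi).2
  · intro κ hκ
    exact (Equiv.symm_apply_eq e).mpr (Subtype.ext rfl)
  · intro i hi
    exact congrArg Subtype.val (e.apply_symm_apply _)

lemma parking_iff (χ : ℕ → ℕ) (hχ : ∀ a b : ℕ, 1 ≤ a → a ≤ b → χ a ≤ χ b)
    {n : ℕ} (f : Fin n → ℕ) (hf1 : ∀ i, 1 ≤ f i)
    (S : Finset (Fin n)) (hS : (Finset.univ.filter fun i => f i ≤ χ 1) = S)
    (hSne : S.Nonempty) (e : Fin (n - S.card) ≃ ↥(Sᶜ)) :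
    IsChiParkingFunction χ n f ↔
      IsChiParkingFunction (fun m => χ (S.card + m) - χ 1) (n - S.card)
        (fun κ => f (e κ) - χ 1) := by
  have hjn : S.card ≤ n := by simpa using S.card_le_univ
  have hj1 : 1 ≤ S.card := hSne.card_pos
  have hout : ∀ z : ↥(Sᶜ), χ 1 < f z := by
    intro z
    have hz : (z : Fin n) ∉ S := Finset.mem_compl.1 z.2
    have hz2 : (z : Fin n) ∉ Finset.univ.filter fun i => f i ≤ χ 1 := by
      rw [hS]; exact hz
    simp only [Finset.mem_filter, Finset.mem_univ, true_and, not_le] at hz2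
    exact hz2
  have hin : ∀ i ∈ S, f i ≤ χ 1 := by
    intro i hi; rw [← hS] at hi; exact (Finset.mem_filter.1 hi).2
  have hsplit : ∀ c : ℕ, ((Finset.univ : Finset (Fin n)).filter fun i => f i ≤ c).card
      = (S.filter fun i => f i ≤ c).card + (Sᶜ.filter fun i => f i ≤ c).card := by
    intro c
    rw [← Finset.card_union_of_disjoint
        (Finset.disjoint_filter_filter disjoint_compl_right),
      ← Finset.filter_union, Finset.union_compl]
  have heq : ∀ c : ℕ, χ 1 ≤ c →
      ((Finset.univ : Finset (Fin (n - S.card))).filter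
          fun κ => f (e κ) - χ 1 ≤ c - χ 1)
        = (Finset.univ.filter fun κ => f (e κ) ≤ c) := by
    intro c hc
    apply Finset.filter_congr
    intro κ _
    have := hout (e κ)
    exact ⟨fun h => by omega, fun h => by omega⟩
  constructor
  · rintro ⟨h1, h2⟩
    refine ⟨fun κ => ?_, fun k hk => ?_⟩
    · show 1 ≤ f (e κ) - χ 1
      have := hout (e κ); omega
    · show k ≤ ((Finset.univ : Finset (Fin (n - S.card))).filter
        fun κ => f (e κ) - χ 1 ≤ χ (S.card + k) - χ 1).card
      simp only [Finset.mem_Icc] at hk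
      have h3 := h2 (S.card + k) (by simp only [Finset.mem_Icc]; omega)
      have hmono : χ 1 ≤ χ (S.card + k) := hχ 1 (S.card + k) le_rfl (by omega)
      rw [heq _ hmono, card_transfer f S e]
      have h4 : (S.filter fun i => f i ≤ χ (S.card + k)).card ≤ S.card :=
        Finset.card_filter_le _ _
      have h5 := hsplit (χ (S.card + k))
      omega
  · rintro ⟨h1, h2⟩
    have h2' : ∀ k ∈ Finset.Icc 1 (n - S.card),
        k ≤ ((Finset.univ : Finset (Fin (n - S.card))).filter
          fun κ => f (e κ) - χ 1 ≤ χ (S.card + k) - χ 1).card := h2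
    refine ⟨hf1, fun k hk => ?_⟩
    simp only [Finset.mem_Icc] at hk
    have hSfull : (S.filter fun i => f i ≤ χ k).card = S.card := by
      rw [Finset.filter_true_of_mem]
      intro i hi; exact (hin i hi).trans (hχ 1 k le_rfl hk.1)
    rcases le_or_gt k S.card with hkj | hkj
    · have := hsplit (χ k); omega
    · have h3 := h2' (k - S.card) (by simp only [Finset.mem_Icc]; omega)
      have hmono : χ 1 ≤ χ k := hχ 1 k le_rfl hk.1
      have hjk : S.card + (k - S.card) = k := by omega
      rw [hjk] at h3
      rw [heq _ hmono, card_transfer f S e] at h3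
      have := hsplit (χ k)
      omega

lemma fiber_card (χ : ℕ → ℕ) (hχ : ∀ a b : ℕ, 1 ≤ a → a ≤ b → χ a ≤ χ b)
    {n : ℕ} (S : Finset (Fin n)) (hSne : S.Nonempty) :
    Nat.card {f : Fin n → ℕ // IsChiParkingFunction χ n f ∧
        (Finset.univ.filter fun i => f i ≤ χ 1) = S}
      = χ 1 ^ S.card * pCount (fun m => χ (S.card + m) - χ 1) (n - S.card) := by
  classical
  set j := S.card with hj
  have hcompl : (Sᶜ).card = n - j := by
    rw [Finset.card_compl]; simp [hj]
  let e : Fin (n - j) ≃ ↥(Sᶜ) := ((Sᶜ).equivFin.trans (finCongr hcompl)).symm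
  set A := {f : Fin n → ℕ // IsChiParkingFunction χ n f ∧
      (Finset.univ.filter fun i => f i ≤ χ 1) = S} with hA
  set B := ((↥S → Fin (χ 1)) ×
      {g : Fin (n - j) → ℕ //
        IsChiParkingFunction (fun m => χ (j + m) - χ 1) (n - j) g}) with hB
  have hcard : Nat.card A = Nat.card B := by
    have hmem : ∀ (x : A) (i : ↥S), x.1 i ≤ χ 1 := by
      intro x i
      have hi : (i : Fin n) ∈ Finset.univ.filter fun i => x.1 i ≤ χ 1 := by
        rw [x.2.2]; exact i.2
      exact (Finset.mem_filter.1 hi).2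
    have hlt : ∀ (x : A) (i : ↥S), x.1 i - 1 < χ 1 := by
      intro x i
      have h1 := x.2.1.1 i
      have h2 := hmem x i
      omega
    let F : A → B := fun x =>
      (fun i => ⟨x.1 i - 1, hlt x i⟩,
        ⟨fun κ => x.1 (e κ) - χ 1,
          (parking_iff χ hχ x.1 x.2.1.1 S x.2.2 hSne e).mp x.2.1⟩)
    have hout : ∀ (x : A) (z : ↥(Sᶜ)), χ 1 < x.1 z := by
      intro x z
      have hz : (z : Fin n) ∉ S := Finset.mem_compl.1 z.2
      have hz2 : (z : Fin n) ∉ Finset.univ.filter fun i => x.1 i ≤ χ 1 := by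
        rw [x.2.2]; exact hz
      simp only [Finset.mem_filter, Finset.mem_univ, true_and, not_le] at hz2
      exact hz2
    apply Nat.card_eq_of_bijective F
    constructor
    · intro x y hxy
      have h1 := congrArg Prod.fst hxy
      have h2 := congrArg (fun p : B => p.2.1) hxy
      ext i
      by_cases hi : i ∈ S
      · have := congrFun h1 ⟨i, hi⟩
        simp only [F, Fin.mk.injEq] at this
        have hx1 := x.2.1.1 i
        have hy1 := y.2.1.1 i
        omega
      · have hic : i ∈ Sᶜ := Finset.mem_compl.2 hi
        have := congrFun h2 (e.symm ⟨i, hic⟩)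
        simp only [F, Equiv.apply_symm_apply] at this
        have hx := hout x ⟨i, hic⟩
        have hy := hout y ⟨i, hic⟩
        simp only at hx hy
        omega
    · rintro ⟨h, g, hg⟩
      let f : Fin n → ℕ := fun i =>
        if hi : i ∈ S then (h ⟨i, hi⟩ : ℕ) + 1
        else g (e.symm ⟨i, Finset.mem_compl.2 hi⟩) + χ 1
    -- positivity
      have hf1 : ∀ i, 1 ≤ f i := by
        intro i
        by_cases hi : i ∈ S
        · simp only [f, dif_pos hi]; omega
        · simp only [f, dif_neg hi]
          have := hg.1 (e.symm ⟨i, Finset.mem_compl.2 hi⟩)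
          omega
      have hfilter : (Finset.univ.filter fun i => f i ≤ χ 1) = S := by
        ext i
        simp only [Finset.mem_filter, Finset.mem_univ, true_and]
        by_cases hi : i ∈ S
        · simp only [f, dif_pos hi, hi, iff_true]
          have := (h ⟨i, hi⟩).isLt
          omega
        · simp only [f, dif_neg hi, hi, iff_false, not_le]
          have := hg.1 (e.symm ⟨i, Finset.mem_compl.2 hi⟩)
          omega
      have hgeq : (fun κ => f (e κ) - χ 1) = g := by
        funext κ
        have hκ : ((e κ : Fin n)) ∉ S := Finset.mem_compl.1 (e κ).2
        simp only [f, dif_neg hκ]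
        rw [show (⟨((e κ : Fin n)), Finset.mem_compl.2 hκ⟩ : ↥(Sᶜ)) = e κ from
          Subtype.ext rfl, Equiv.symm_apply_apply]
        omega
      have hpark : IsChiParkingFunction χ n f :=
        (parking_iff χ hχ f hf1 S hfilter hSne e).mpr (by rw [hgeq]; exact hg)
      refine ⟨⟨f, hpark, hfilter⟩, ?_⟩
      simp only [F]
      refine Prod.ext ?_ (Subtype.ext ?_)
      · funext i
        ext
        simp only [f, dif_pos i.2]
        simp
      · funext κ
        exact congrFun hgeq κ
  rw [hcard, hB, Nat.card_prod, Nat.card_fun, Nat.card_eq_fintype_card,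
    Fintype.card_fin, Nat.card_eq_finsetCard, pCount]

noncomputable def dAux (χ : ℕ → ℕ) (n j : ℕ) : ℕ :=
  if j = 0 then 0 else χ 1 ^ j * pCount (fun m => χ (j + m) - χ 1) (n - j)

/-- For a non-decreasing `χ : ℕ_{>0} → ℕ` and `n ≥ 1`:
`p_χ(n) = Σ_{j=1}^{n} binom(n, j) · χ(1)^j · p_{ρ_j}(n − j)`,
where `ρ_j(m) = χ(j + m) − χ(1)`. -/
theorem pCount_recurrence (χ : ℕ → ℕ)
    (hχ : ∀ a b : ℕ, 1 ≤ a → a ≤ b → χ a ≤ χ b) (n : ℕ) (hn : 1 ≤ n) :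
    pCount χ n =
      ∑ j ∈ Finset.Icc 1 n,
        n.choose j * χ 1 ^ j * pCount (fun m => χ (j + m) - χ 1) (n - j) := by
  classical
  have key : pCount χ n = ∑ S : Finset (Fin n),
      Nat.card {f : Fin n → ℕ // IsChiParkingFunction χ n f ∧
        (Finset.univ.filter fun i => f i ≤ χ 1) = S} := by
    rw [pCount,
      ← Nat.card_congr (Equiv.sigmaFiberEquiv
        (fun x : {f : Fin n → ℕ // IsChiParkingFunction χ n f} =>
          Finset.univ.filter fun i => x.1 i ≤ χ 1))]
    letI : ∀ S : Finset (Fin n), Fintype {x : {f : Fin n → ℕ // IsChiParkingFunction χ n f} //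
        (Finset.univ.filter fun i => x.1 i ≤ χ 1) = S} := fun S => Fintype.ofFinite _
    rw [Nat.card_eq_fintype_card, Fintype.card_sigma]
    apply Finset.sum_congr rfl
    intro S _
    rw [← Nat.card_eq_fintype_card]
    exact Nat.card_congr (Equiv.subtypeSubtypeEquivSubtypeInter
      (IsChiParkingFunction χ n)
      (fun f => (Finset.univ.filter fun i => f i ≤ χ 1) = S))
  have hd0 : dAux χ n 0 = 0 := rfl
  have hdpos : ∀ j : ℕ, j ≠ 0 →
      dAux χ n j = χ 1 ^ j * pCount (fun m => χ (j + m) - χ 1) (n - j) :=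
    fun j hj => if_neg hj
  have hcS : ∀ S : Finset (Fin n),
      Nat.card {f : Fin n → ℕ // IsChiParkingFunction χ n f ∧
        (Finset.univ.filter fun i => f i ≤ χ 1) = S} = dAux χ n S.card := by
    intro S
    rcases S.eq_empty_or_nonempty with rfl | hSne
    · rw [Finset.card_empty, hd0, Nat.card_eq_zero]
      left
      constructor
      rintro ⟨f, hf, hfilter⟩
      have h1 := hf.2 1 (by simp [hn])
      rw [hfilter] at h1
      simp at h1
    · rw [fiber_card χ hχ S hSne, hdpos _ hSne.card_pos.ne']
  rw [key]
  rw [Finset.sum_congr rfl fun S _ => hcS S]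
  rw [← Finset.powerset_univ]
  rw [Finset.sum_powerset]
  have hcardu : (Finset.univ : Finset (Fin n)).card = n := by simp
  have h2 : ∀ j : ℕ, ∑ S ∈ Finset.powersetCard j (Finset.univ : Finset (Fin n)), dAux χ n S.card
      = n.choose j * dAux χ n j := by
    intro j
    rw [Finset.sum_powersetCard, hcardu, smul_eq_mul]
  have h3 : Finset.range (n + 1) = insert 0 (Finset.Icc 1 n) := by
    clear key hcS
    ext x; simp; omega
  rw [hcardu, h3, Finset.sum_insert (by simp), h2 0, hd0, Nat.mul_zero,
    Nat.zero_add]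
  apply Finset.sum_congr rfl
  intro j hj
  have hj1 : 1 ≤ j := (Finset.mem_Icc.1 hj).1
  rw [h2 j, hdpos j (Nat.one_le_iff_ne_zero.mp hj1), ← mul_assoc]
end
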